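/- Let G be a 3-γc-critical graph with a minimum cut set S and maximum independent set I such that α(G) ≥ κ(G) + 1, κ(G) < δ(G), and |S \ I| ≤ 1. Then G belongs to the family 𝒢₂(3,3). -/

import Mathlib

open SimpleGraph Finset

variable {V : Type*}

/-- The graph `G` with the extra edge `uv` added. -/
def SimpleGraph.addEdge (G : SimpleGraph V) (u v : V) : SimpleGraph V :=
  G ⊔ SimpleGraph.fromEdgeSet {s(u, v)}

/-- `D` is a connected dominating set of `G`. -/
def SimpleGraph.IsCDS (G : SimpleGraph V) (D : Set V) : Prop :=
  (∀ v : V, v ∈ D ∨ ∃ u ∈ D, G.Adj u v) ∧ (G.induce D).Connected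

/-- The connected domination number. -/
noncomputable def SimpleGraph.cdn [Fintype V] (G : SimpleGraph V) : ℕ :=
  sInf {n | ∃ D : Finset V, D.card = n ∧ G.IsCDS ↑D}

/-- `G` is a `3`-`γ_c`-critical graph. -/
def SimpleGraph.IsCritical3 [Fintype V] (G : SimpleGraph V) : Prop :=
  G.Connected ∧ G.cdn = 3 ∧
    ∀ u v : V, u ≠ v → ¬G.Adj u v → (G.addEdge u v).cdn < 3

/-- `s` is an independent set of `G`. -/
def SimpleGraph.IsIndepSetPW (G : SimpleGraph V) (s : Set V) : Prop :=
  s.Pairwise (fun a b => ¬G.Adj a b)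

/-- The independence number. -/
noncomputable def SimpleGraph.indepNum' [Fintype V] (G : SimpleGraph V) : ℕ :=
  sSup {n | ∃ s : Finset V, G.IsIndepSetPW ↑s ∧ s.card = n}

/-- `S` is a vertex cut: removing it leaves a non-connected graph. -/
def SimpleGraph.IsVertexCut [Fintype V] (G : SimpleGraph V) (S : Finset V) : Prop :=
  ¬(G.induce ((↑S : Set V)ᶜ)).Connected

/-- The vertex connectivity: minimum size of a vertex cut. -/
noncomputable def SimpleGraph.conn [Fintype V] (G : SimpleGraph V) : ℕ :=
  sInf {n | ∃ S : Finset V, S.card = n ∧ G.IsVertexCut S}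

/-- One-sided description of the special edges in the family `𝒢₂(3,3)`. -/
def G2Half {V : Type*} (J1 J2 : Finset V) (u1 u2 w w1 v1 : V) (a b : V) : Prop :=
  (a = v1 ∧ b ∈ J1) ∨
  (a = w1 ∧ (b ∈ J1 ∨ (b ∈ J2 ∧ b ≠ u1) ∨ b = w)) ∨
  (a = w ∧ (b ∈ J1 ∨ (b ∈ J2 ∧ b ≠ u2) ∨ b = w1))

/-- `G` is the graph in the family `𝒢₂(3,3)` built from the given data. -/
def SimpleGraph.G2Witness {V : Type*} (G : SimpleGraph V)
    (J1 J2 : Finset V) (u1 u2 w w1 v1 : V) : Prop :=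
  3 ≤ J1.card ∧ 3 ≤ J2.card ∧ Disjoint J1 J2 ∧
  u1 ∈ J2 ∧ u2 ∈ J2 ∧
  (w ∉ J1 ∧ w ∉ J2) ∧ (w1 ∉ J1 ∧ w1 ∉ J2) ∧ (v1 ∉ J1 ∧ v1 ∉ J2) ∧
  w ≠ w1 ∧ w ≠ v1 ∧ w1 ≠ v1 ∧
  (∀ z : V, z ∈ J1 ∨ z ∈ J2 ∨ z = w ∨ z = w1 ∨ z = v1) ∧
  ∀ a b : V, G.Adj a b ↔ a ≠ b ∧
    ((a ∈ J1 ∧ b ∈ J1) ∨ (a ∈ J2 ∧ b ∈ J2) ∨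
      G2Half J1 J2 u1 u2 w w1 v1 a b ∨ G2Half J1 J2 u1 u2 w w1 v1 b a)

/-- `G` belongs to the family `𝒢₂(3,3)`. -/
def SimpleGraph.IsG2 {V : Type*} (G : SimpleGraph V) : Prop :=
  ∃ (J1 J2 : Finset V) (u1 u2 w w1 v1 : V), G.G2Witness J1 J2 u1 u2 w w1 v1

/-!
Adding a missing edge `uv` to a 3-γc-critical graph creates a connected dominating set with at
most two vertices, hence a dominating edge. So for non-adjacent `u`, `v`, either `{u, v}`
dominates `G`, or some edge `ux` with `x` not adjacent to `v` dominates `G - v`, or the same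
holds with `u` and `v` exchanged. The whole proof applies this trichotomy to well-chosen
non-adjacent pairs around the minimum cut `S` with sides `A` and `B`.

Since `κ < δ`, each side has at least two vertices, which rules out `κ ≤ 1`. The independent set
`I` has more than `κ` vertices and misses at most one vertex of `S`; this forces it to meet both
sides, say in `a₀ ∈ A` and `b₀ ∈ B`. Up to symmetry, the pair `a₀ b₀` produces a vertex
`w ∈ S \ I` adjacent to `b₀` and to all of `A` except `a₀`. Then all neighbours of `a₀` lie in
`A`, so `S = {w, w₁}`, and further pairs force the cliques and the adjacencies of `w` and `w₁`
that define `𝒢₂(3,3)`.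
-/

namespace SimpleGraph

variable {G : SimpleGraph V} {u v w x z a b : V}

def PairDominates (G : SimpleGraph V) (u v : V) : Prop :=
  ∀ z, z ≠ u → z ≠ v → G.Adj u z ∨ G.Adj v z

theorem PairDominates.symm (h : G.PairDominates u v) : G.PairDominates v u :=
  fun z hv hu => (h z hu hv).symm

def EdgeDominatesExcept (G : SimpleGraph V) (u x v : V) : Prop :=
  G.Adj u x ∧ ∀ z, z ≠ u → z ≠ x → z ≠ v → G.Adj u z ∨ G.Adj x z

theorem EdgeDominatesExcept.symm (h : G.EdgeDominatesExcept u x v) :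
    G.EdgeDominatesExcept x u v :=
  ⟨h.1.symm, fun z hzx hzu hzv => (h.2 z hzu hzx hzv).symm⟩

theorem EdgeDominatesExcept.adj_of_not_adj (h : G.EdgeDominatesExcept u x v) (hz : ¬G.Adj u z)
    (hzu : z ≠ u) (hzv : z ≠ v) : G.Adj x z :=
  (h.2 z hzu (fun hzx => hz (hzx ▸ h.1)) hzv).resolve_left hz

theorem isCDS_singleton (h : ∀ z, z ≠ a → G.Adj a z) : G.IsCDS {a} := by
  refine ⟨fun z => ?_, by simp⟩
  by_cases hz : z = a
  · exact .inl hz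
  · exact .inr ⟨a, rfl, h z hz⟩

theorem isCDS_pair (hab : G.Adj a b) (h : G.PairDominates a b) : G.IsCDS {a, b} := by
  refine ⟨fun z => ?_, induce_pair_connected_of_adj hab⟩
  by_cases hza : z = a
  · exact .inl (.inl hza)
  by_cases hzb : z = b
  · exact .inl (.inr hzb)
  rcases h z hza hzb with h | h
  · exact .inr ⟨a, .inl rfl, h⟩
  · exact .inr ⟨b, .inr rfl, h⟩

theorem IsCDS.adj_of_pair (h : G.IsCDS {a, b}) (hab : a ≠ b) : G.Adj a b := by
  obtain ⟨p⟩ := h.2.preconnected ⟨a, .inl rfl⟩ ⟨b, .inr rfl⟩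
  obtain ⟨d, -, hd, hd'⟩ := p.exists_boundary_dart {⟨a, .inl rfl⟩} rfl
    (by simpa [Subtype.ext_iff] using hab.symm)
  obtain ⟨⟨⟨c, hc⟩, ⟨c', hc'⟩⟩, hcc'⟩ := d
  simp only [Set.mem_singleton_iff, Subtype.ext_iff] at hd hd'
  obtain rfl : c = a := hd
  obtain rfl : c' = b := hc'.resolve_left hd'
  exact hcc'

theorem IsCDS.pairDominates (h : G.IsCDS {a, b}) : G.PairDominates a b := by
  intro z hza hzb
  rcases h.1 z with (rfl | rfl) | ⟨y, rfl | rfl, hy⟩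
  exacts [absurd rfl hza, absurd rfl hzb, .inl hy, .inr hy]

theorem addEdge_comm (u v : V) : G.addEdge u v = G.addEdge v u := by
  simp only [addEdge, Sym2.eq_swap]

theorem adj_of_addEdge_adj (h : (G.addEdge u v).Adj a b) (hbu : b ≠ u) (hbv : b ≠ v) :
    G.Adj a b := by
  simp only [addEdge, sup_adj, fromEdgeSet_adj, Set.mem_singleton_iff, Sym2.eq_iff] at h
  grind

section Fintype

variable [Fintype V]

theorem cdn_le_card {D : Finset V} (h : G.IsCDS D) : G.cdn ≤ #D :=
  Nat.sInf_le ⟨D, rfl, h⟩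

theorem Connected.exists_isCDS_card_eq_cdn (h : G.Connected) :
    ∃ D : Finset V, #D = G.cdn ∧ G.IsCDS D := by
  have huniv : G.IsCDS (Set.univ : Set V) :=
    ⟨fun _ => .inl trivial, h.map (induceUnivIso G).symm.toHom (induceUnivIso G).symm.surjective⟩
  exact Nat.sInf_mem (s := {n | ∃ D : Finset V, #D = n ∧ G.IsCDS D})
    ⟨_, Finset.univ, rfl, by simpa using huniv⟩

theorem Connected.exists_adj_pairDominates (h : G.Connected) (hcdn : G.cdn < 3) (huv : u ≠ v) :
    ∃ a b, G.Adj a b ∧ G.PairDominates a b := by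
  classical
  obtain ⟨D, hcard, hD⟩ := h.exists_isCDS_card_eq_cdn
  obtain ⟨⟨d, hd⟩⟩ := hD.2.nonempty
  have hpos : 0 < #D := Finset.card_pos.mpr ⟨d, hd⟩
  obtain h1 | h2 : #D = 1 ∨ #D = 2 := by omega
  · obtain ⟨d, rfl⟩ := Finset.card_eq_one.mp h1
    rw [Finset.coe_singleton] at hD
    have hdom : ∀ z, z ≠ d → G.Adj d z := fun z hz => by
      rcases hD.1 z with h | ⟨y, rfl, hy⟩
      exacts [absurd h hz, hy]
    obtain ⟨z, hz⟩ : ∃ z, z ≠ d := by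
      by_cases hu : u = d
      exacts [⟨v, hu ▸ huv.symm⟩, ⟨u, hu⟩]
    exact ⟨d, z, hdom z hz, fun y hy _ => .inl (hdom y hy)⟩
  · obtain ⟨a, b, hab, rfl⟩ := Finset.card_eq_two.mp h2
    rw [Finset.coe_pair] at hD
    exact ⟨a, b, hD.adj_of_pair hab, hD.pairDominates⟩

namespace IsCritical3

theorem exists_not_adj (hG : G.IsCritical3) (a : V) : ∃ z, z ≠ a ∧ ¬G.Adj a z := by
  classical
  by_contra! h
  have := cdn_le_card (D := {a}) (by rw [Finset.coe_singleton]; exact isCDS_singleton h)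
  simp [hG.2.1] at this

theorem not_pairDominates (hG : G.IsCritical3) (hab : G.Adj a b) : ¬G.PairDominates a b := by
  classical
  intro h
  have := cdn_le_card (D := {a, b}) (by rw [Finset.coe_pair]; exact isCDS_pair hab h)
  have := Finset.card_le_two (a := a) (b := b)
  have := hG.2.1
  omega

theorem exists_not_adj_of_adj (hG : G.IsCritical3) (hva : G.Adj v a) (haw : a ≠ w) :
    ∃ z, z ≠ w ∧ z ≠ v ∧ ¬G.Adj w z := by
  by_contra! h
  obtain rfl | hvw := eq_or_ne v w
  · obtain ⟨z, hz, hwz⟩ := hG.exists_not_adj v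
    exact hwz (h z hz hz)
  refine hG.not_pairDominates (h a haw hva.ne') fun z hzw hza => ?_
  obtain rfl | hzv := eq_or_ne z v
  exacts [.inr hva.symm, .inl (h z hzw hzv)]

theorem edgeDominatesExcept_of_addEdge (hG : G.IsCritical3) (hux : (G.addEdge u v).Adj u x)
    (hdom : (G.addEdge u v).PairDominates u x) (hxv : x ≠ v) :
    ¬G.Adj v x ∧ G.EdgeDominatesExcept u x v := by
  have hux' : G.Adj u x := adj_of_addEdge_adj hux hux.ne' hxv
  have hdom' : ∀ z, z ≠ u → z ≠ x → z ≠ v → G.Adj u z ∨ G.Adj x z := fun z hzu hzx hzv =>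
    (hdom z hzu hzx).imp (adj_of_addEdge_adj · hzu hzv) (adj_of_addEdge_adj · hzu hzv)
  refine ⟨fun hvx => hG.not_pairDominates hux' fun z hzu hzx => ?_, hux', hdom'⟩
  obtain rfl | hzv := eq_or_ne z v
  exacts [.inr hvx.symm, hdom' z hzu hzx hzv]

theorem pairDominates_or (hG : G.IsCritical3) (huv : u ≠ v) (h : ¬G.Adj u v) :
    G.PairDominates u v ∨ (∃ x, ¬G.Adj v x ∧ G.EdgeDominatesExcept u x v) ∨
      ∃ x, ¬G.Adj u x ∧ G.EdgeDominatesExcept v x u := by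
  set H := G.addEdge u v
  obtain ⟨a, b, hab, hdom⟩ :=
    (hG.1.mono le_sup_left : H.Connected).exists_adj_pairDominates (hG.2.2 u v huv h) huv
  wlog ha : a = u ∨ a = v generalizing a b
  · by_cases hb : b = u ∨ b = v
    · exact this b a hab.symm hdom.symm hb
    push Not at ha hb
    refine (hG.not_pairDominates (adj_of_addEdge_adj hab hb.1 hb.2) fun z hza hzb => ?_).elim
    exact (hdom z hza hzb).imp (fun h => (adj_of_addEdge_adj h.symm ha.1 ha.2).symm)
      (fun h => (adj_of_addEdge_adj h.symm hb.1 hb.2).symm)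
  rcases ha with rfl | rfl
  · obtain rfl | hbv := eq_or_ne b v
    · exact .inl fun z hzu hzv => (hdom z hzu hzv).imp
        (adj_of_addEdge_adj · hzu hzv) (adj_of_addEdge_adj · hzu hzv)
    · exact .inr (.inl ⟨b, hG.edgeDominatesExcept_of_addEdge hab hdom hbv⟩)
  · obtain rfl | hbu := eq_or_ne b u
    · exact .inl fun z hzu hzv => (hdom z hzv hzu).symm.imp
        (adj_of_addEdge_adj · hzu hzv) (adj_of_addEdge_adj · hzu hzv)
    · rw [show H = G.addEdge a u from addEdge_comm u a] at hab hdom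
      exact .inr (.inr ⟨b, hG.edgeDominatesExcept_of_addEdge hab hdom hbu⟩)

end IsCritical3

end Fintype

structure IsSeparation (G : SimpleGraph V) (S A B : Finset V) : Prop where
  mem_or_mem_or_mem : ∀ z, z ∈ A ∨ z ∈ B ∨ z ∈ S
  disjoint : Disjoint A B
  disjoint_left : Disjoint A S
  disjoint_right : Disjoint B S
  not_adj : ∀ a ∈ A, ∀ b ∈ B, ¬G.Adj a b

namespace IsSeparation

variable {S A B : Finset V} {s a₀ : V}

theorem symm (hs : G.IsSeparation S A B) : G.IsSeparation S B A :=
  ⟨fun z => (hs.mem_or_mem_or_mem z).elim (.inr ∘ .inl) (·.elim .inl (.inr ∘ .inr)),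
    hs.disjoint.symm, hs.disjoint_right, hs.disjoint_left,
    fun b hb a ha h => hs.not_adj a ha b hb h.symm⟩

theorem ne (hs : G.IsSeparation S A B) (ha : a ∈ A) (hb : b ∈ B) : a ≠ b :=
  Finset.disjoint_left.mp hs.disjoint ha ∘ (· ▸ hb)

theorem ne_of_mem_sep (hs : G.IsSeparation S A B) (ha : a ∈ A) (hs' : s ∈ S) : a ≠ s :=
  Finset.disjoint_left.mp hs.disjoint_left ha ∘ (· ▸ hs')

theorem ne_of_mem_sep_right (hs : G.IsSeparation S A B) (hb : b ∈ B) (hs' : s ∈ S) : b ≠ s :=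
  hs.symm.ne_of_mem_sep hb hs'

theorem not_mem_sep (hs : G.IsSeparation S A B) (ha : a ∈ A) : a ∉ S :=
  Finset.disjoint_left.mp hs.disjoint_left ha

theorem mem_left_or_mem_sep (hs : G.IsSeparation S A B) (ha : a ∈ A) (h : G.Adj a x) :
    x ∈ A ∨ x ∈ S :=
  (hs.mem_or_mem_or_mem x).imp_right (·.resolve_left fun hx => hs.not_adj a ha x hx h)

theorem mem_sep_of_adj (hs : G.IsSeparation S A B) (ha : a ∈ A) (hb : b ∈ B)
    (hxa : G.Adj x a) (hxb : G.Adj x b) : x ∈ S :=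
  (hs.mem_left_or_mem_sep ha hxa.symm).resolve_left fun hx => hs.not_adj x hx b hb hxb

theorem exists_adj_mem_sep (hs : G.IsSeparation S A B) (hconn : G.Connected) (ha : a ∈ A)
    (hb : b ∈ B) : ∃ b' ∈ B, ∃ s ∈ S, G.Adj b' s := by
  obtain ⟨p⟩ := hconn.preconnected b a
  obtain ⟨⟨⟨b', s⟩, h⟩, -, hb', hs'⟩ := p.exists_boundary_dart (B : Set V) hb
    (Finset.disjoint_left.mp hs.disjoint ha)
  exact ⟨b', hb', s, (hs.symm.mem_left_or_mem_sep hb' h).resolve_left hs', h⟩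

theorem exists_adj_left [Fintype V] [DecidableRel G.Adj] (hs : G.IsSeparation S A B)
    (hdeg : ∀ v, #S < G.degree v) (ha : a ∈ A) : ∃ a' ∈ A, G.Adj a a' := by
  classical
  obtain ⟨x, hx, hxS⟩ := Finset.exists_mem_notMem_of_card_lt_card (hdeg a)
  rw [mem_neighborFinset] at hx
  exact ⟨x, (hs.mem_left_or_mem_sep ha hx).resolve_right hxS, hx⟩

theorem one_lt_card_left [Fintype V] [DecidableRel G.Adj] (hs : G.IsSeparation S A B)
    (hdeg : ∀ v, #S < G.degree v) (ha : a ∈ A) : 1 < #A := by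
  obtain ⟨a', ha', h⟩ := hs.exists_adj_left hdeg ha
  exact Finset.one_lt_card.mpr ⟨a, ha, a', ha', h.ne⟩

theorem adj_of_edgeDominatesExcept (hs : G.IsSeparation S A B) (hu : u ∈ A)
    (h : G.EdgeDominatesExcept u x v) (hb : b ∈ B) (hbv : b ≠ v) : G.Adj x b :=
  h.adj_of_not_adj (hs.not_adj u hu b hb) (hs.ne hu hb).symm hbv

theorem mem_sep_of_edgeDominatesExcept (hs : G.IsSeparation S A B) (hu : u ∈ A)
    (h : G.EdgeDominatesExcept u x v) (hb : b ∈ B) (hbv : b ≠ v) : x ∈ S :=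
  hs.mem_sep_of_adj hu hb h.1.symm (hs.adj_of_edgeDominatesExcept hu h hb hbv)

theorem not_edgeDominatesExcept (hs : G.IsSeparation S A B) (ha₀ : a₀ ∈ A)
    (hN : G.neighborSet a₀ ⊆ A) (hb : b ∈ B) (hv : a₀ ≠ v) : ¬G.EdgeDominatesExcept b x v :=
  fun hx => hs.not_adj x (hN (hx.adj_of_not_adj (hs.not_adj a₀ ha₀ b hb ·.symm) (hs.ne ha₀ hb)
    hv).symm) b hb hx.1.symm

end IsSeparation

theorem IsVertexCut.exists_isSeparation [Fintype V] {S : Finset V}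
    (h : G.IsVertexCut S) (hS : ∃ v, v ∉ S) :
    ∃ A B, G.IsSeparation S A B ∧ A.Nonempty ∧ B.Nonempty := by
  classical
  have : Nonempty ((S : Set V)ᶜ : Set V) := let ⟨v, hv⟩ := hS; ⟨⟨v, hv⟩⟩
  obtain ⟨x, y, hxy⟩ : ∃ x y, ¬(G.induce (S : Set V)ᶜ).Reachable x y := by
    by_contra! hr
    exact h ⟨hr⟩
  let A : Finset V := {z | ∃ hz : z ∉ S, (G.induce (S : Set V)ᶜ).Reachable x ⟨z, hz⟩}
  let B : Finset V := {z | z ∉ S ∧ z ∉ A}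
  have hA : ∀ {z} (hz : z ∉ S), z ∈ A ↔ (G.induce (S : Set V)ᶜ).Reachable x ⟨z, hz⟩ := by
    intro z hz
    simpa [A] using ⟨fun ⟨_, h⟩ => h, fun h => ⟨hz, h⟩⟩
  have hB : ∀ {z}, z ∈ B ↔ z ∉ S ∧ z ∉ A := by simp [B]
  refine ⟨A, B, ⟨fun z => ?_, ?_, ?_, ?_, ?_⟩, ⟨x, (hA x.2).mpr .rfl⟩,
    ⟨y, hB.mpr ⟨y.2, fun hy => hxy ((hA y.2).mp hy)⟩⟩⟩
  · by_cases hz : z ∈ S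
    · exact .inr (.inr hz)
    · by_cases hzA : z ∈ A
      exacts [.inl hzA, .inr (.inl (hB.mpr ⟨hz, hzA⟩))]
  · exact Finset.disjoint_left.mpr fun _ ha hb => (hB.mp hb).2 ha
  · exact Finset.disjoint_left.mpr fun _ ha hs => by simp [A, hs] at ha
  · exact Finset.disjoint_left.mpr fun _ hb => (hB.mp hb).1
  · intro a ha b hb hab
    have haS : a ∉ S := by simp [A] at ha; exact ha.1
    obtain ⟨hbS, hbA⟩ := hB.mp hb
    exact hbA ((hA hbS).mpr (((hA haS).mp ha).trans (Adj.reachable (G := G.induce _)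
      (u := ⟨a, haS⟩) (v := ⟨b, hbS⟩) hab)))

section Critical

variable [Fintype V] {S A B : Finset V} {s t t' a₀ b₀ b' : V}

theorem IsSeparation.adj_of_neighborSet_subset (hG : G.IsCritical3) (hs : G.IsSeparation S A B)
    (hB : 1 < #B) (ha₀ : a₀ ∈ A) (hN : G.neighborSet a₀ ⊆ A) (ha : a ∈ A) (hne : a ≠ a₀) :
    G.Adj a₀ a := by
  by_contra hna
  obtain ⟨b₀, hb₀⟩ := Finset.card_pos.mp (by omega : 0 < #B)
  obtain ⟨b₁, hb₁, hb₁b₀⟩ := Finset.exists_mem_ne hB b₀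
  rcases hG.pairDominates_or (hs.ne ha hb₀) (hs.not_adj a ha b₀ hb₀) with h | ⟨x, -, hx⟩ |
    ⟨x, -, hx⟩
  · exact (h a₀ hne.symm (hs.ne ha₀ hb₀)).elim (hna ·.symm) (hs.not_adj a₀ ha₀ b₀ hb₀ ·.symm)
  · have hxa₀ := hx.adj_of_not_adj (hna ·.symm) hne.symm (hs.ne ha₀ hb₀)
    exact hs.not_mem_sep (hN hxa₀.symm) (hs.mem_sep_of_edgeDominatesExcept ha hx hb₁ hb₁b₀)
  · exact hs.not_edgeDominatesExcept ha₀ hN hb₀ hne.symm hx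

theorem IsSeparation.adj_of_not_adj_of_neighborSet_subset (hG : G.IsCritical3)
    (hs : G.IsSeparation S A B) (ha₀ : a₀ ∈ A) (hN : G.neighborSet a₀ ⊆ A) (ht : t ∈ S)
    (hta₀ : ¬G.Adj t a₀) (hb' : b' ∈ B) (htb' : ¬G.Adj t b') (hb : b ∈ B) (hbb' : b ≠ b') :
    G.Adj t b := by
  have ha₀t := hs.ne_of_mem_sep ha₀ ht
  rcases hG.pairDominates_or (hs.ne_of_mem_sep_right hb' ht) (htb' ·.symm) with h | ⟨x, -, hx⟩ |
    ⟨x, -, hx⟩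
  · exact ((h a₀ (hs.ne ha₀ hb') ha₀t).elim (hs.not_adj a₀ ha₀ b' hb' ·.symm) hta₀).elim
  · exact (hs.not_edgeDominatesExcept ha₀ hN hb' ha₀t hx).elim
  · have hxA : x ∈ A := hN (hx.adj_of_not_adj hta₀ ha₀t (hs.ne ha₀ hb')).symm
    exact hx.symm.adj_of_not_adj (hs.not_adj x hxA b hb) (hs.ne hxA hb).symm hbb'

theorem IsSeparation.adj_of_mem_sep (hG : G.IsCritical3) (hs : G.IsSeparation S A B)
    (ha₀ : a₀ ∈ A) (hN : G.neighborSet a₀ ⊆ A) (hb₀ : b₀ ∈ B) (ht : t ∈ S) (ht' : t' ∈ S)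
    (hne : t ≠ t') (htb₀ : ¬G.Adj t b₀) (ht'b₀ : ¬G.Adj t' b₀) : G.Adj t t' := by
  have hna : ∀ {t}, t ∈ S → ¬G.Adj t a₀ := fun ht h => hs.not_mem_sep (hN h.symm) ht
  have key : ∀ t ∈ S, ∀ t' ∈ S, ¬G.Adj t b₀ → ∀ x, ¬G.EdgeDominatesExcept t x t' := by
    intro t ht t' ht' htb₀ x hx
    have hxA : x ∈ A := hN (hx.adj_of_not_adj (hna ht) (hs.ne_of_mem_sep ha₀ ht)
      (hs.ne_of_mem_sep ha₀ ht')).symm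
    exact hs.not_adj x hxA b₀ hb₀ (hx.adj_of_not_adj htb₀ (hs.ne_of_mem_sep_right hb₀ ht)
      (hs.ne_of_mem_sep_right hb₀ ht'))
  by_contra h
  rcases hG.pairDominates_or hne h with hd | ⟨x, -, hx⟩ | ⟨x, -, hx⟩
  · exact (hd a₀ (hs.ne_of_mem_sep ha₀ ht) (hs.ne_of_mem_sep ha₀ ht')).elim (hna ht) (hna ht')
  · exact key t ht t' ht' htb₀ x hx
  · exact key t' ht' t ht ht'b₀ x hx

theorem IsCritical3.false_of_isSeparation_singleton (hG : G.IsCritical3)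
    (hs : G.IsSeparation {s} A B) (hA : 1 < #A) (hB : 1 < #B) (hz : z ∈ B) (hsz : ¬G.Adj s z) :
    False := by
  have hmem : ∀ {x}, x ∈ ({s} : Finset V) → x = s := Finset.mem_singleton.mp
  obtain ⟨a, ha⟩ := Finset.card_pos.mp (by omega : 0 < #A)
  obtain ⟨b₀, hb₀, t, ht, hb₀s⟩ := hs.exists_adj_mem_sep hG.1 ha hz
  rw [hmem ht] at hb₀s
  have hsA : ∀ a ∈ A, G.Adj s a := by
    intro a ha
    rcases hG.pairDominates_or (hs.ne ha hz) (hs.not_adj a ha z hz) with h | ⟨x, -, hx⟩ |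
      ⟨x, -, hx⟩
    · exact ((h s (hs.ne_of_mem_sep ha (Finset.mem_singleton_self s)).symm
        (hs.ne_of_mem_sep_right hz (Finset.mem_singleton_self s)).symm).resolve_right
        (hsz ·.symm)).symm
    · obtain ⟨z', hz', hz'z⟩ := Finset.exists_mem_ne hB z
      obtain rfl := hmem (hs.mem_sep_of_edgeDominatesExcept ha hx hz' hz'z)
      exact hx.1.symm
    · obtain ⟨a', ha', ha'a⟩ := Finset.exists_mem_ne hA a
      obtain rfl := hmem (hs.symm.mem_sep_of_edgeDominatesExcept hz hx ha' ha'a)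
      exact absurd hx.1.symm hsz
  rcases hG.pairDominates_or (hs.ne ha hb₀) (hs.not_adj a ha b₀ hb₀) with h | ⟨x, hb₀x, hx⟩ |
    ⟨x, hax, hx⟩
  · refine hG.not_pairDominates hb₀s.symm fun y hys hyb₀ => ?_
    rcases hs.mem_or_mem_or_mem y with hy | hy | hy
    · exact .inl (hsA y hy)
    · exact .inr ((h y (hs.ne ha hy).symm hyb₀).resolve_left (hs.not_adj a ha y hy))
    · exact absurd (hmem hy) hys
  · obtain ⟨b', hb', hb'b₀⟩ := Finset.exists_mem_ne hB b₀
    obtain rfl := hmem (hs.mem_sep_of_edgeDominatesExcept ha hx hb' hb'b₀)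
    exact hb₀x hb₀s
  · obtain ⟨a', ha', ha'a⟩ := Finset.exists_mem_ne hA a
    obtain rfl := hmem (hs.symm.mem_sep_of_edgeDominatesExcept hb₀ hx ha' ha'a)
    exact hax (hsA a ha).symm

theorem IsCritical3.two_le_card_of_isSeparation (hG : G.IsCritical3) (hs : G.IsSeparation S A B)
    (hA : 1 < #A) (hB : 1 < #B) : 2 ≤ #S := by
  obtain ⟨a, ha⟩ := Finset.card_pos.mp (by omega : 0 < #A)
  obtain ⟨b, hb⟩ := Finset.card_pos.mp (by omega : 0 < #B)
  obtain ⟨-, -, s, hsS, -⟩ := hs.exists_adj_mem_sep hG.1 ha hb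
  by_contra! h
  obtain rfl : S = {s} := Finset.eq_singleton_iff_unique_mem.mpr
    ⟨hsS, fun t ht => Finset.card_le_one.mp (by omega) t ht s hsS⟩
  obtain ⟨z, hzs, hsz⟩ := hG.exists_not_adj s
  rcases hs.mem_or_mem_or_mem z with hz | hz | hz
  · exact hG.false_of_isSeparation_singleton hs.symm hB hA hz hsz
  · exact hG.false_of_isSeparation_singleton hs hA hB hz hsz
  · exact hzs (Finset.mem_singleton.mp hz)

end Critical

/-- `v₁`, `u₁`, `w`, `w₁` play their roles in `𝒢₂(3,3)`, with `A = J1 ∪ {v1}` and `B = J2`. -/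
structure G2Frame [DecidableEq V] (G : SimpleGraph V) (A B : Finset V) (v₁ u₁ w w₁ : V) :
    Prop where
  isSeparation : G.IsSeparation {w, w₁} A B
  ne : w ≠ w₁
  v₁_mem : v₁ ∈ A
  u₁_mem : u₁ ∈ B
  not_adj_w_v₁ : ¬G.Adj w v₁
  not_adj_w₁_v₁ : ¬G.Adj w₁ v₁
  not_adj_w₁_u₁ : ¬G.Adj w₁ u₁
  adj_w_u₁ : G.Adj w u₁
  adj_w_w₁ : G.Adj w w₁
  adj_w_left : ∀ a ∈ A, a ≠ v₁ → G.Adj w a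

namespace G2Frame

variable [DecidableEq V] {A B : Finset V} {v₁ u₁ u₂ w w₁ : V}

theorem neighborSet_subset (hF : G.G2Frame A B v₁ u₁ w w₁) : G.neighborSet v₁ ⊆ A := by
  intro z h
  refine (hF.isSeparation.mem_left_or_mem_sep hF.v₁_mem h).resolve_right fun hz => ?_
  rcases Finset.mem_insert.mp hz with rfl | hz
  · exact hF.not_adj_w_v₁ h.symm
  rw [Finset.mem_singleton.mp hz] at h
  exact hF.not_adj_w₁_v₁ h.symm

theorem degree_lt [Fintype V] [DecidableRel G.Adj] (hF : G.G2Frame A B v₁ u₁ w w₁)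
    (hdeg : ∀ v, 2 < G.degree v) (v : V) :
    #({w, w₁} : Finset V) < G.degree v := by
  rw [Finset.card_pair hF.ne]
  exact hdeg v

theorem adj_v₁ [Fintype V] [DecidableRel G.Adj] (hF : G.G2Frame A B v₁ u₁ w w₁)
    (hG : G.IsCritical3) (hdeg : ∀ v, 2 < G.degree v) (ha : a ∈ A) (hne : a ≠ v₁) : G.Adj v₁ a :=
  hF.isSeparation.adj_of_neighborSet_subset hG
    (hF.isSeparation.symm.one_lt_card_left (hF.degree_lt hdeg) hF.u₁_mem) hF.v₁_mem
    hF.neighborSet_subset ha hne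

theorem isClique_left [Fintype V] [DecidableRel G.Adj] (hF : G.G2Frame A B v₁ u₁ w w₁)
    (hG : G.IsCritical3) (hdeg : ∀ v, 2 < G.degree v) : G.IsClique (A : Set V) := by
  have hs := hF.isSeparation
  have hu₁ := hF.u₁_mem
  have key : ∀ a ∈ A, ∀ a' ∈ A, a' ≠ v₁ → ∀ x, ¬G.Adj a' x →
      ¬G.EdgeDominatesExcept a x a' := by
    intro a ha a' ha' ha'v₁ x ha'x hx
    have hxu₁ := hx.adj_of_not_adj (hs.not_adj a ha u₁ hu₁) (hs.ne ha hu₁).symm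
      (hs.ne ha' hu₁).symm
    rcases Finset.mem_insert.mp (hs.mem_sep_of_adj ha hu₁ hx.1.symm hxu₁) with rfl | hxw₁
    · exact ha'x (hF.adj_w_left a' ha' ha'v₁).symm
    · exact hF.not_adj_w₁_u₁ (Finset.mem_singleton.mp hxw₁ ▸ hxu₁)
  intro a ha a' ha' hne
  obtain rfl | hav₁ := eq_or_ne a v₁
  · exact hF.adj_v₁ hG hdeg ha' hne.symm
  obtain rfl | ha'v₁ := eq_or_ne a' v₁
  · exact (hF.adj_v₁ hG hdeg ha hne).symm
  by_contra hna
  rcases hG.pairDominates_or hne hna with h | ⟨x, hx', hx⟩ | ⟨x, hx', hx⟩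
  · exact (h u₁ (hs.ne ha hu₁).symm (hs.ne ha' hu₁).symm).elim (hs.not_adj a ha u₁ hu₁)
      (hs.not_adj a' ha' u₁ hu₁)
  · exact key a ha a' ha' ha'v₁ x hx' hx
  · exact key a' ha' a ha hav₁ x hx' hx

theorem isClique_right [Fintype V] (hF : G.G2Frame A B v₁ u₁ w w₁)
    (hG : G.IsCritical3) : G.IsClique (B : Set V) := by
  have hs := hF.isSeparation
  have hv₁ := hF.v₁_mem
  intro b hb b' hb' hne
  by_contra hna
  rcases hG.pairDominates_or hne hna with h | ⟨x, -, hx⟩ | ⟨x, -, hx⟩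
  · exact (h v₁ (hs.ne hv₁ hb) (hs.ne hv₁ hb')).elim (hs.not_adj v₁ hv₁ b hb ·.symm)
      (hs.not_adj v₁ hv₁ b' hb' ·.symm)
  · exact hs.not_edgeDominatesExcept hv₁ hF.neighborSet_subset hb (hs.ne hv₁ hb') hx
  · exact hs.not_edgeDominatesExcept hv₁ hF.neighborSet_subset hb' (hs.ne hv₁ hb) hx

theorem exists_not_adj_w [Fintype V] [DecidableRel G.Adj] (hF : G.G2Frame A B v₁ u₁ w w₁)
    (hG : G.IsCritical3) (hdeg : ∀ v, 2 < G.degree v) : ∃ u₂ ∈ B, ¬G.Adj w u₂ := by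
  have hs := hF.isSeparation
  obtain ⟨a, ha, hv₁a⟩ := hs.exists_adj_left (hF.degree_lt hdeg) hF.v₁_mem
  obtain ⟨z, hzw, hzv₁, hwz⟩ :=
    hG.exists_not_adj_of_adj hv₁a (hs.ne_of_mem_sep ha (Finset.mem_insert_self w {w₁}))
  rcases hs.mem_or_mem_or_mem z with hz | hz | hz
  · exact absurd (hF.adj_w_left z hz hzv₁) hwz
  · exact ⟨z, hz, hwz⟩
  · rcases Finset.mem_insert.mp hz with rfl | hz
    · exact absurd rfl hzw
    · exact absurd (Finset.mem_singleton.mp hz ▸ hF.adj_w_w₁) hwz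

theorem adj_w₁_of_not_adj_w [Fintype V] [DecidableRel G.Adj] (hF : G.G2Frame A B v₁ u₁ w w₁)
    (hG : G.IsCritical3) (hdeg : ∀ v, 2 < G.degree v) (hu₂ : u₂ ∈ B) (hwu₂ : ¬G.Adj w u₂) :
    G.Adj w₁ u₂ ∧ ∀ a ∈ A, a ≠ v₁ → G.Adj w₁ a := by
  have hs := hF.isSeparation
  have hv₁ := hF.v₁_mem
  have hwS : w ∈ ({w, w₁} : Finset V) := Finset.mem_insert_self w {w₁}
  rcases hG.pairDominates_or (hs.ne hv₁ hu₂) (hs.not_adj v₁ hv₁ u₂ hu₂) with h | ⟨x, -, hx⟩ |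
    ⟨y, -, hy⟩
  · exact ((h w (hs.ne_of_mem_sep hv₁ hwS).symm (hs.ne_of_mem_sep_right hu₂ hwS).symm).elim
      (hF.not_adj_w_v₁ ·.symm) (hwu₂ ·.symm)).elim
  · have hxu₁ := hx.adj_of_not_adj (hs.not_adj v₁ hv₁ u₁ hF.u₁_mem)
      (hs.ne hv₁ hF.u₁_mem).symm fun h => hwu₂ (h ▸ hF.adj_w_u₁)
    exact (hs.not_adj x (hF.neighborSet_subset hx.1) u₁ hF.u₁_mem hxu₁).elim
  · obtain ⟨a', ha', ha'v₁⟩ := Finset.exists_mem_ne (hs.one_lt_card_left (hF.degree_lt hdeg) hv₁) v₁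
    rcases Finset.mem_insert.mp (hs.symm.mem_sep_of_edgeDominatesExcept hu₂ hy ha' ha'v₁) with
      rfl | hyw₁
    · exact absurd hy.1.symm hwu₂
    · obtain rfl := Finset.mem_singleton.mp hyw₁
      exact ⟨hy.1.symm, fun a ha hne => hs.symm.adj_of_edgeDominatesExcept hu₂ hy ha hne⟩

theorem three_le_card_erase [Fintype V] [DecidableRel G.Adj] (hF : G.G2Frame A B v₁ u₁ w w₁)
    (hdeg : ∀ v, 2 < G.degree v) : 3 ≤ #(A.erase v₁) := by
  have : G.neighborFinset v₁ ⊆ A.erase v₁ := fun z hz => by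
    rw [mem_neighborFinset] at hz
    exact Finset.mem_erase.mpr ⟨hz.ne', hF.neighborSet_subset hz⟩
  have := Finset.card_le_card this
  have := hdeg v₁
  rw [card_neighborFinset_eq_degree] at *
  omega

theorem three_le_card_right [Fintype V] [DecidableRel G.Adj] (hF : G.G2Frame A B v₁ u₁ w w₁)
    (hdeg : ∀ v, 2 < G.degree v) (hu₂ : u₂ ∈ B) (hwu₂ : ¬G.Adj w u₂) : 3 ≤ #B := by
  have hs := hF.isSeparation
  have : G.neighborFinset u₂ ⊆ insert w₁ (B.erase u₂) := fun z hz => by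
    rw [mem_neighborFinset] at hz
    rcases hs.symm.mem_left_or_mem_sep hu₂ hz with hzB | hzS
    · exact Finset.mem_insert_of_mem (Finset.mem_erase.mpr ⟨hz.ne', hzB⟩)
    · rcases Finset.mem_insert.mp hzS with rfl | hzw₁
      · exact absurd hz.symm hwu₂
      · exact Finset.mem_insert.mpr (.inl (Finset.mem_singleton.mp hzw₁))
  have h1 := (Finset.card_le_card this).trans (Finset.card_insert_le _ _)
  have h2 := hdeg u₂
  rw [card_neighborFinset_eq_degree, Finset.card_erase_of_mem hu₂] at h1
  omega

theorem isG2 [Fintype V] [DecidableRel G.Adj] (hF : G.G2Frame A B v₁ u₁ w w₁)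
    (hG : G.IsCritical3) (hdeg : ∀ v, 2 < G.degree v) : G.IsG2 := by
  have hwS : w ∈ ({w, w₁} : Finset V) := Finset.mem_insert_self w {w₁}
  have hw₁S : w₁ ∈ ({w, w₁} : Finset V) := Finset.mem_insert_of_mem (Finset.mem_singleton_self w₁)
  obtain ⟨u₂, hu₂, hwu₂⟩ := hF.exists_not_adj_w hG hdeg
  obtain ⟨hw₁u₂, hw₁A⟩ := hF.adj_w₁_of_not_adj_w hG hdeg hu₂ hwu₂
  have hw₁B : ∀ b ∈ B, b ≠ u₁ → G.Adj w₁ b := fun b hb hbu₁ =>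
    hF.isSeparation.adj_of_not_adj_of_neighborSet_subset hG hF.v₁_mem hF.neighborSet_subset
      hw₁S hF.not_adj_w₁_v₁ hF.u₁_mem hF.not_adj_w₁_u₁ hb hbu₁
  have hwB : ∀ b ∈ B, b ≠ u₂ → G.Adj w b := fun b hb hbu₂ =>
    hF.isSeparation.adj_of_not_adj_of_neighborSet_subset hG hF.v₁_mem hF.neighborSet_subset
      hwS hF.not_adj_w_v₁ hu₂ hwu₂ hb hbu₂
  have hAcl : ∀ a ∈ A, ∀ a' ∈ A, a ≠ a' → G.Adj a a' := fun a ha a' ha' h =>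
    hF.isClique_left hG hdeg ha ha' h
  have hBcl : ∀ b ∈ B, ∀ b' ∈ B, b ≠ b' → G.Adj b b' := fun b hb b' hb' h =>
    hF.isClique_right hG hb hb' h
  have hJ1 := hF.three_le_card_erase hdeg
  have hJ2 := hF.three_le_card_right hdeg hu₂ hwu₂
  obtain ⟨hs, hne, hv₁, hu₁, hwv₁, hw₁v₁, hw₁u₁, -, hww₁, hwA⟩ := hF
  have hAS : ∀ a ∈ A, a ≠ w ∧ a ≠ w₁ := fun a ha =>
    ⟨hs.ne_of_mem_sep ha hwS, hs.ne_of_mem_sep ha hw₁S⟩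
  have hBS : ∀ b ∈ B, b ≠ w ∧ b ≠ w₁ := fun b hb =>
    ⟨hs.ne_of_mem_sep_right hb hwS, hs.ne_of_mem_sep_right hb hw₁S⟩
  have hcov : ∀ z, z ∈ A ∨ z ∈ B ∨ z = w ∨ z = w₁ := fun z => by
    simpa using hs.mem_or_mem_or_mem z
  have hAB := hs.not_adj
  refine ⟨A.erase v₁, B, u₁, u₂, w, w₁, v₁, hJ1, hJ2,
    Finset.disjoint_of_subset_left (Finset.erase_subset _ _) hs.disjoint, hu₁, hu₂, ?_⟩
  simp only [G2Half, Finset.mem_erase]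
  have hsymm : ∀ x y, G.Adj x y → G.Adj y x := fun _ _ h => h.symm
  have hirr : ∀ x, ¬G.Adj x x := fun x => G.irrefl
  refine ⟨⟨?_, ?_⟩, ⟨?_, ?_⟩, ⟨?_, ?_⟩, hne, ?_, ?_, ?_, fun a b => ?_⟩
  any_goals grind
  rcases hcov a with ha | ha | rfl | rfl <;> rcases hcov b with hb | hb | rfl | rfl <;> grind

end G2Frame

section Independent

variable [Fintype V] {S A B I : Finset V} {p q a₀ a₁ b₀ w : V}

theorem IsSeparation.exists_g2Frame [DecidableEq V] (hG : G.IsCritical3) (hs : G.IsSeparation S A B)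
    (hA : 1 < #A) (hk : 2 ≤ #S) (hI : G.IsIndepSetPW I) (hSI : #(S \ I) ≤ 1) (ha₀ : a₀ ∈ A)
    (ha₀I : a₀ ∈ I) (hb₀ : b₀ ∈ B) (hb₀I : b₀ ∈ I) (hw : G.EdgeDominatesExcept b₀ w a₀)
    (hwa₀ : ¬G.Adj a₀ w) : ∃ w₁, S = {w, w₁} ∧ G.G2Frame A B a₀ b₀ w w₁ := by
  obtain ⟨a', ha', ha'a₀⟩ := Finset.exists_mem_ne hA a₀
  have hwS : w ∈ S := hs.symm.mem_sep_of_edgeDominatesExcept hb₀ hw ha' ha'a₀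
  have hwI : w ∉ I := fun h => hI hb₀I h (hs.ne_of_mem_sep_right hb₀ hwS) hw.1
  have hSI' : ∀ t ∈ S, t ≠ w → t ∈ I := fun t ht htw => by
    by_contra htI
    exact htw (Finset.card_le_one.mp hSI t (Finset.mem_sdiff.mpr ⟨ht, htI⟩) w
      (Finset.mem_sdiff.mpr ⟨hwS, hwI⟩))
  have hN : G.neighborSet a₀ ⊆ A := fun z hz => by
    refine (hs.mem_left_or_mem_sep ha₀ hz).resolve_right fun hzS => ?_
    obtain rfl | hzw := eq_or_ne z w
    exacts [hwa₀ hz, hI ha₀I (hSI' z hzS hzw) (hs.ne_of_mem_sep ha₀ hzS) hz]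
  have hnb₀ : ∀ t ∈ S, t ≠ w → ¬G.Adj t b₀ := fun t ht htw =>
    hI (hSI' t ht htw) hb₀I (hs.ne_of_mem_sep_right hb₀ ht).symm
  obtain ⟨w₁, hw₁S, hw₁w⟩ := Finset.exists_mem_ne (by omega : 1 < #S) w
  have hS : S = {w, w₁} := by
    refine Finset.ext fun t => ⟨fun ht => ?_, fun ht => ?_⟩
    · by_contra htw
      simp only [Finset.mem_insert, Finset.mem_singleton, not_or] at htw
      exact hI (hSI' t ht htw.1) (hSI' w₁ hw₁S hw₁w) htw.2
        (hs.adj_of_mem_sep hG ha₀ hN hb₀ ht hw₁S htw.2 (hnb₀ t ht htw.1) (hnb₀ w₁ hw₁S hw₁w))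
    · rcases Finset.mem_insert.mp ht with rfl | ht
      exacts [hwS, Finset.mem_singleton.mp ht ▸ hw₁S]
  subst hS
  refine ⟨w₁, rfl, hs, hw₁w.symm, ha₀, hb₀, (hwa₀ ·.symm),
    (hI (hSI' w₁ hw₁S hw₁w) ha₀I (hs.ne_of_mem_sep ha₀ hw₁S).symm), hnb₀ w₁ hw₁S hw₁w,
    hw.1.symm, ?_, fun a ha hne => hs.symm.adj_of_edgeDominatesExcept hb₀ hw ha hne⟩
  exact hw.adj_of_not_adj (hnb₀ w₁ hw₁S hw₁w ·.symm) (hs.ne_of_mem_sep_right hb₀ hw₁S).symm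
    (hs.ne_of_mem_sep ha₀ hw₁S).symm

theorem IsSeparation.false_of_subset_indep (hG : G.IsCritical3) (hs : G.IsSeparation S A B)
    (hB : 1 < #B) (hk : 1 < #S) (hI : G.IsIndepSetPW I) (hSI : S ⊆ I) (ha₀ : a₀ ∈ A)
    (ha₀I : a₀ ∈ I) : False := by
  have hna : ∀ {t}, t ∈ S → ¬G.Adj t a₀ := fun ht =>
    hI (hSI ht) ha₀I (hs.ne_of_mem_sep ha₀ ht).symm
  have hN : G.neighborSet a₀ ⊆ A := fun z hz =>
    (hs.mem_left_or_mem_sep ha₀ hz).resolve_right fun hzS => hna hzS hz.symm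
  obtain ⟨b₀, hb₀⟩ := Finset.card_pos.mp (by omega : 0 < #B)
  have key : ∀ t ∈ S, ∀ t' ∈ S, t ≠ t' → ∀ x, ¬G.Adj t' x → ¬G.EdgeDominatesExcept t x t' := by
    intro t ht t' ht' htt' x ht'x hx
    have hxA : x ∈ A := hN (hx.adj_of_not_adj (hna ht) (hs.ne_of_mem_sep ha₀ ht)
      (hs.ne_of_mem_sep ha₀ ht')).symm
    have hxa₀ : x ≠ a₀ := fun h => hna ht (h ▸ hx.1)
    rcases hG.pairDominates_or (hs.ne_of_mem_sep ha₀ ht') (hna ht' ·.symm) with h | ⟨y, -, hy⟩ |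
      ⟨q, ha₀q, hq⟩
    · exact (h t (hs.ne_of_mem_sep ha₀ ht).symm htt').elim (hna ht ·.symm)
        (hI (hSI ht') (hSI ht) htt'.symm)
    · exact hs.not_mem_sep (hN hy.1) (hs.mem_sep_of_edgeDominatesExcept ha₀ hy hb₀
        (hs.ne_of_mem_sep_right hb₀ ht'))
    · have hqx := hq.adj_of_not_adj ht'x (hs.ne_of_mem_sep hxA ht') hxa₀
      rcases hs.mem_or_mem_or_mem q with hqA | hqB | hqS
      · exact ha₀q (hs.adj_of_neighborSet_subset hG hB ha₀ hN hqA
          fun h => hna ht' (h ▸ hq.1))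
      · exact hs.not_adj x hxA q hqB hqx.symm
      · exact hI (hSI ht') (hSI hqS) hq.1.ne hq.1
  obtain ⟨s₁, hs₁, s₂, hs₂, hne⟩ := Finset.one_lt_card.mp hk
  rcases hG.pairDominates_or hne (hI (hSI hs₁) (hSI hs₂) hne) with h | ⟨x, hx', hx⟩ |
    ⟨x, hx', hx⟩
  · exact (h a₀ (hs.ne_of_mem_sep ha₀ hs₁) (hs.ne_of_mem_sep ha₀ hs₂)).elim (hna hs₁) (hna hs₂)
  · exact key s₁ hs₁ s₂ hs₂ hne x hx' hx
  · exact key s₂ hs₂ s₁ hs₁ hne.symm x hx' hx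

theorem IsSeparation.false_of_forall_adj_right [DecidableRel G.Adj] (hG : G.IsCritical3)
    (hs : G.IsSeparation S A B) (hdeg : ∀ v, #S < G.degree v) (hB : 1 < #B)
    (hI : G.IsIndepSetPW I) (hp : p ∈ A) (hpI : p ∈ I) (hq : q ∈ A) (hqI : q ∈ I) (hpq : p ≠ q)
    (hSw : ∀ t ∈ S, t ∉ I → t = w) (hpw : ¬G.Adj p w) (hwB : ∀ b ∈ B, G.Adj w b)
    (hwS : ∀ t ∈ S, t ≠ w → G.Adj w t) : False := by
  obtain ⟨b₀, hb₀⟩ := Finset.card_pos.mp (by omega : 0 < #B)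
  obtain ⟨b₁, hb₁, hb₁b₀⟩ := Finset.exists_mem_ne hB b₀
  have hN : G.neighborSet p ⊆ A := fun z hz => by
    refine (hs.mem_left_or_mem_sep hp hz).resolve_right fun hzS => ?_
    by_cases hzI : z ∈ I
    · exact hI hpI hzI (hs.ne_of_mem_sep hp hzS) hz
    · exact hpw (hSw z hzS hzI ▸ hz)
  rcases hG.pairDominates_or (hs.ne hp hb₀) (hs.not_adj p hp b₀ hb₀) with h | ⟨x, -, hx⟩ |
    ⟨y, -, hy⟩
  · exact (h q hpq.symm (hs.ne hq hb₀)).elim (hI hpI hqI hpq) (hs.not_adj q hq b₀ hb₀ ·.symm)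
  · exact hs.not_mem_sep (hN hx.1) (hs.mem_sep_of_edgeDominatesExcept hp hx hb₁ hb₁b₀)
  · have hyq := hy.adj_of_not_adj (hs.not_adj q hq b₀ hb₀ ·.symm) (hs.ne hq hb₀) hpq.symm
    have hyS := hs.mem_sep_of_adj hq hb₀ hyq hy.1.symm
    obtain rfl := hSw y hyS fun hyI => hI hyI hqI hyq.ne hyq
    obtain ⟨a₂, ha₂, hpa₂⟩ := hs.exists_adj_left hdeg hp
    obtain ⟨z, hzy, hzp, hyz⟩ := hG.exists_not_adj_of_adj hpa₂ (hs.ne_of_mem_sep ha₂ hyS)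
    rcases hs.mem_or_mem_or_mem z with hz | hz | hz
    exacts [hyz (hs.symm.adj_of_edgeDominatesExcept hb₀ hy hz hzp), hyz (hwB z hz),
      hyz (hwS z hz hzy)]

theorem IsSeparation.false_of_two_mem_indep [DecidableRel G.Adj] (hG : G.IsCritical3)
    (hs : G.IsSeparation S A B) (hdeg : ∀ v, #S < G.degree v) (hB : 1 < #B)
    (hI : G.IsIndepSetPW I) (hSw : ∀ t ∈ S, t ∉ I → t = w) (ha₀ : a₀ ∈ A) (ha₀I : a₀ ∈ I)
    (ha₁ : a₁ ∈ A) (ha₁I : a₁ ∈ I) (hne : a₀ ≠ a₁) : False := by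
  obtain ⟨b₀, hb₀⟩ := Finset.card_pos.mp (by omega : 0 < #B)
  have key : ∀ p ∈ A, p ∈ I → ∀ q ∈ A, q ∈ I → p ≠ q → ∀ x, ¬G.Adj p x →
      ¬G.EdgeDominatesExcept q x p := by
    intro p hp hpI q hq hqI hpq x hpx hx
    have hxb₀ := hx.adj_of_not_adj (hs.not_adj q hq b₀ hb₀) (hs.ne hq hb₀).symm
      (hs.ne hp hb₀).symm
    have hxS := hs.mem_sep_of_adj hq hb₀ hx.1.symm hxb₀
    obtain rfl := hSw x hxS fun hxI => hI hqI hxI hx.1.ne hx.1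
    refine hs.false_of_forall_adj_right hG hdeg hB hI hp hpI hq hqI hpq hSw hpx
      (fun b hb => hs.adj_of_edgeDominatesExcept hq hx hb (hs.ne hp hb).symm) fun t ht htx => ?_
    have htI : t ∈ I := by_contra fun h => htx (hSw t ht h)
    exact hx.adj_of_not_adj (hI hqI htI (hs.ne_of_mem_sep hq ht)) (hs.ne_of_mem_sep hq ht).symm
      (hs.ne_of_mem_sep hp ht).symm
  rcases hG.pairDominates_or hne (hI ha₀I ha₁I hne) with h | ⟨x, hx', hx⟩ | ⟨x, hx', hx⟩
  · exact (h b₀ (hs.ne ha₀ hb₀).symm (hs.ne ha₁ hb₀).symm).elim (hs.not_adj a₀ ha₀ b₀ hb₀)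
      (hs.not_adj a₁ ha₁ b₀ hb₀)
  · exact key a₁ ha₁ ha₁I a₀ ha₀ ha₀I hne.symm x hx' hx
  · exact key a₀ ha₀ ha₀I a₁ ha₁ ha₁I hne x hx' hx

theorem IsSeparation.exists_mem_right_of_indep [DecidableEq V] [DecidableRel G.Adj]
    (hG : G.IsCritical3) (hs : G.IsSeparation S A B) (hdeg : ∀ v, #S < G.degree v)
    (hB : 1 < #B) (hk : 2 ≤ #S) (hI : G.IsIndepSetPW I) (hSI : #(S \ I) ≤ 1) (hIS : #S < #I) :
    ∃ b ∈ B, b ∈ I := by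
  by_contra! hIB
  have hIA : ∀ a ∈ I, a ∉ S → a ∈ A := fun a ha haS =>
    (hs.mem_or_mem_or_mem a).resolve_right fun h => h.elim (hIB a · ha) haS
  by_cases hSI0 : S ⊆ I
  · obtain ⟨a₀, ha₀I, ha₀S⟩ := Finset.exists_mem_notMem_of_card_lt_card hIS
    exact hs.false_of_subset_indep hG hB (by omega) hI hSI0 (hIA a₀ ha₀I ha₀S) ha₀I
  obtain ⟨w, hwS, hwI⟩ := Finset.not_subset.mp hSI0
  have hSw : ∀ t ∈ S, t ∉ I → t = w := fun t ht htI => Finset.card_le_one.mp hSI t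
    (Finset.mem_sdiff.mpr ⟨ht, htI⟩) w (Finset.mem_sdiff.mpr ⟨hwS, hwI⟩)
  have : 1 < #(I \ S) := by
    have h1 := Finset.card_sdiff_add_card_inter I S
    have h2 : #(I ∩ S) < #S := Finset.card_lt_card
      ⟨Finset.inter_subset_right, fun h => hwI (Finset.mem_inter.mp (h hwS)).1⟩
    omega
  obtain ⟨a₀, ha₀, a₁, ha₁, hne⟩ := Finset.one_lt_card.mp this
  rw [Finset.mem_sdiff] at ha₀ ha₁
  exact hs.false_of_two_mem_indep hG hdeg hB hI hSw (hIA _ ha₀.1 ha₀.2) ha₀.1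
    (hIA _ ha₁.1 ha₁.2) ha₁.1 hne

theorem IsSeparation.isG2_of_mem_indep [DecidableEq V] [DecidableRel G.Adj] (hG : G.IsCritical3)
    (hs : G.IsSeparation S A B) (hdeg : ∀ v, #S < G.degree v) (hA : 1 < #A) (hB : 1 < #B)
    (hk : 2 ≤ #S) (hI : G.IsIndepSetPW I) (hSI : #(S \ I) ≤ 1) (ha₀ : a₀ ∈ A) (ha₀I : a₀ ∈ I)
    (hb₀ : b₀ ∈ B) (hb₀I : b₀ ∈ I) : G.IsG2 := by
  obtain ⟨s₀, hs₀⟩ : (S ∩ I).Nonempty := by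
    have := Finset.card_inter_add_card_sdiff S I
    exact Finset.card_pos.mp (by omega)
  obtain ⟨hs₀S, hs₀I⟩ := Finset.mem_inter.mp hs₀
  have hdeg' : ∀ {w w₁}, w ≠ w₁ → S = {w, w₁} → ∀ v, 2 < G.degree v := fun hne hS v => by
    simpa [hS, Finset.card_pair hne] using hdeg v
  rcases hG.pairDominates_or (hs.ne ha₀ hb₀) (hs.not_adj a₀ ha₀ b₀ hb₀) with h | ⟨w, hb₀w, hw⟩ |
    ⟨w, ha₀w, hw⟩
  · have ha₀s₀ := hs.ne_of_mem_sep ha₀ hs₀S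
    have hb₀s₀ := hs.ne_of_mem_sep_right hb₀ hs₀S
    exact ((h s₀ ha₀s₀.symm hb₀s₀.symm).elim (hI ha₀I hs₀I ha₀s₀) (hI hb₀I hs₀I hb₀s₀)).elim
  · obtain ⟨w₁, hS, hF⟩ := hs.symm.exists_g2Frame hG hB hk hI hSI hb₀ hb₀I ha₀ ha₀I hw hb₀w
    exact hF.isG2 hG (hdeg' hF.ne hS)
  · obtain ⟨w₁, hS, hF⟩ := hs.exists_g2Frame hG hA hk hI hSI ha₀ ha₀I hb₀ hb₀I hw ha₀w
    exact hF.isG2 hG (hdeg' hF.ne hS)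

end Independent

end SimpleGraph

theorem stmt_16_general {V : Type*} [Fintype V] [DecidableEq V]
    (G : SimpleGraph V) [DecidableRel G.Adj] (hG : G.IsCritical3)
    (S I : Finset V)
    (hcut : G.IsVertexCut S) (hmins : S.card = G.conn)
    (hI : G.IsIndepSetPW ↑I) (hImax : I.card = G.indepNum')
    (ha : G.conn + 1 ≤ G.indepNum') (hkd : G.conn < G.minDegree)
    (hSI : (S \ I).card ≤ 1) :
    G.IsG2 := by
  have hdeg : ∀ v, #S < G.degree v := fun v => hmins ▸ hkd.trans_le (G.minDegree_le_degree v)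
  obtain ⟨v⟩ := hG.1.nonempty
  obtain ⟨z, -, hz⟩ := Finset.exists_mem_notMem_of_card_lt_card
    ((hdeg v).trans_le ((G.degree_lt_card_verts v).le.trans Finset.card_univ.ge))
  obtain ⟨A, B, hs, ⟨a, haA⟩, ⟨b, hbB⟩⟩ := hcut.exists_isSeparation ⟨z, hz⟩
  have hA := hs.one_lt_card_left hdeg haA
  have hB := hs.symm.one_lt_card_left hdeg hbB
  have hk := hG.two_le_card_of_isSeparation hs hA hB
  have hIS : #S < #I := by omega
  obtain ⟨a₀, ha₀, ha₀I⟩ := hs.symm.exists_mem_right_of_indep hG hdeg hA hk hI hSI hIS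
  obtain ⟨b₀, hb₀, hb₀I⟩ := hs.exists_mem_right_of_indep hG hdeg hB hk hI hSI hIS
  exact hs.isG2_of_mem_indep hG hdeg hA hB hk hI hSI ha₀ ha₀I hb₀ hb₀I

theorem stmt_16 {V : Type*} [Fintype V] [Nonempty V] [DecidableEq V]
    (G : SimpleGraph V) [DecidableRel G.Adj] (hG : G.IsCritical3)
    (S I : Finset V)
    (hcut : G.IsVertexCut S) (hmins : S.card = G.conn)
    (hI : G.IsIndepSetPW ↑I) (hImax : I.card = G.indepNum')
    (ha : G.conn + 1 ≤ G.indepNum') (hkd : G.conn < G.minDegree)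
    (hSI : (S \ I).card ≤ 1) :
    G.IsG2 :=
  stmt_16_general G hG S I hcut hmins hI hImax ha hkd hSI
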